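/- arXiv:1410.5581 — 2 statements merged into one kernel-verified Lean document; each statement's English description precedes it below -/
import Mathlib

section
/- Let f : [0,∞) → ℝ satisfy (H1), let λ, μ > 0, and suppose there exists a₀ > 0 such that f(x) ≠ 0 for all x ≥ a₀. If ∫_{a₀}^∞ 1/|f(x)| dx < ∞, then the series S = Σ_{n≥1} (1/π_n) Σ_{k≥n+1} π_k/λ_k is finite. -/
/-!
Condition (H1) says exactly that `g x = θ x - f x` is nondecreasing on `[0, ∞)`. Integrability of
`1 / |f|` first forces `f < 0` beyond `a₀` (otherwise `0 < f x ≤ θ x` and the integral is at least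
harmonic), so `|f| ≤ g` there and the integral dominates `∑ 1 / g n`. For a monotone `g` this
summability gives `n / g n → 0` (Olivier's theorem), so `-f n ≥ g n / 2` grows superlinearly.
As `λ_n ≤ (λ + θ) n` and `μ_n ≥ -f n`, eventually `λ_n / μ_n ≤ 1 / 2` and `∑ 1 / μ_n < ∞`.
Finally `π_k / (π_n λ_k) ≤ max 1 λ₁ · (∏_{n < i < k} λ_i / μ_i) / μ_k ≤ C 2^{n + 1 - k} / μ_k`,
and summing these geometric weights over `n` and `k` bounds `S` by a multiple of `∑ 1 / μ_k`.
-/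

open MeasureTheory Set Filter Topology Finset Function

theorem summable_of_le_on_Ico {F : ℝ → ℝ} {a : ℕ → ℝ} (N : ℕ) (ha : ∀ n, 0 ≤ a n)
    (hle : ∀ n ≥ N, ∀ x ∈ Ico (n : ℝ) (n + 1), a n ≤ F x)
    (hF : ∫⁻ x in Ici (N : ℝ), ENNReal.ofReal (F x) < ⊤) : Summable a := by
  set I : ℕ → Set ℝ := fun j => Ico ((j + N : ℕ) : ℝ) ((j + N : ℕ) + 1)
  have hI : ∀ j, ENNReal.ofReal (a (j + N)) ≤ ∫⁻ x in I j, ENNReal.ofReal (F x) := fun j =>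
    calc ENNReal.ofReal (a (j + N)) = ∫⁻ _ in I j, ENNReal.ofReal (a (j + N)) := by
          simp [I, Real.volume_Ico]
      _ ≤ ∫⁻ x in I j, ENNReal.ofReal (F x) :=
          lintegral_mono_ae <| (ae_restrict_iff' measurableSet_Ico).2 <|
            Eventually.of_forall fun x hx => ENNReal.ofReal_le_ofReal (hle _ (by omega) x hx)
  have hdisj : Pairwise (Disjoint on I) := fun i j hij => Set.disjoint_left.2 fun x hi hj =>
    hij (by have := (Nat.floor_eq_on_Ico _ x hi).symm.trans (Nat.floor_eq_on_Ico _ x hj); omega)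
  have hsub : (⋃ j, I j) ⊆ Ici (N : ℝ) := iUnion_subset fun j x hx => by
    simp only [I, Set.mem_Ico, Nat.cast_add] at hx
    simp only [Set.mem_Ici]
    linarith [(j.cast_nonneg : (0 : ℝ) ≤ j)]
  have hfin : ∑' j, ENNReal.ofReal (a (j + N)) ≠ ⊤ := ne_top_of_lt <|
    calc ∑' j, ENNReal.ofReal (a (j + N)) ≤ ∑' j, ∫⁻ x in I j, ENNReal.ofReal (F x) :=
          ENNReal.tsum_le_tsum hI
      _ = ∫⁻ x in ⋃ j, I j, ENNReal.ofReal (F x) :=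
          (lintegral_iUnion (fun _ => measurableSet_Ico) hdisj _).symm
      _ ≤ ∫⁻ x in Ici (N : ℝ), ENNReal.ofReal (F x) := lintegral_mono_set hsub
      _ < ⊤ := hF
  rw [← summable_nat_add_iff N]
  simpa [ENNReal.toReal_ofReal (ha _)] using ENNReal.summable_toReal hfin

theorem Antitone.tendsto_natCast_mul_of_summable {a : ℕ → ℝ} (ha : Antitone a)
    (hs : Summable a) : Tendsto (fun n : ℕ => (n : ℝ) * a n) atTop (𝓝 0) := by
  have h0 : ∀ n, 0 ≤ a n := ha.le_of_tendsto hs.tendsto_atTop_zero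
  have htail : Tendsto (fun n : ℕ => 2 * ∑' k, a (k + n / 2)) atTop (𝓝 0) := by
    simpa using ((tendsto_sum_nat_add a).comp (Nat.tendsto_div_const_atTop two_ne_zero)).const_mul 2
  refine squeeze_zero (fun n => mul_nonneg n.cast_nonneg (h0 n)) (fun n => ?_) htail
  have hcard : (n : ℝ) ≤ 2 * ((n - n / 2 : ℕ) : ℝ) := by
    exact_mod_cast (by omega : n ≤ 2 * (n - n / 2))
  -- each of the `n - n / 2` terms `a (n / 2), …, a (n - 1)` dominates `a n`
  calc (n : ℝ) * a n ≤ 2 * ((n - n / 2 : ℕ) : ℝ) * a n := mul_le_mul_of_nonneg_right hcard (h0 n)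
    _ = 2 * ∑ k ∈ range (n - n / 2), a n := by simp [mul_assoc]
    _ ≤ 2 * ∑ k ∈ range (n - n / 2), a (k + n / 2) := by
        gcongr with k hk
        exact ha (by have := Finset.mem_range.1 hk; omega)
    _ ≤ 2 * ∑' k, a (k + n / 2) := by
        gcongr
        exact ((summable_nat_add_iff _).2 hs).sum_le_tsum _ fun k _ => h0 _

theorem Monotone.tendsto_natCast_div_of_summable_one_div {G : ℕ → ℝ} (hG : Monotone G)
    {N : ℕ} (hN : 0 < G N) (hs : Summable fun n => 1 / G n) :
    Tendsto (fun n : ℕ => (n : ℝ) / G n) atTop (𝓝 0) := by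
  have hpos : ∀ n, 0 < G (n + N) := fun n => hN.trans_le (hG (by omega))
  have hanti : Antitone fun n => 1 / G (n + N) := fun m n hmn =>
    one_div_le_one_div_of_le (hpos m) (hG (by omega))
  have hs' : Summable fun n => 1 / G (n + N) := (summable_nat_add_iff N).2 hs
  rw [← tendsto_add_atTop_iff_nat N]
  have := (hanti.tendsto_natCast_mul_of_summable hs').add
    (hs'.tendsto_atTop_zero.const_mul (N : ℝ))
  simp only [add_zero, mul_zero] at this
  refine this.congr fun n => ?_
  push_cast
  ring

theorem exists_prod_le_mul_pow_card {ρ : ℕ → ℝ} {r : ℝ} (hr : 0 < r)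
    (h : ∀ᶠ i in atTop, ρ i ≤ r) :
    ∃ C, ∀ s : Finset ℕ, (∀ i ∈ s, 0 ≤ ρ i) → ∏ i ∈ s, ρ i ≤ C * r ^ #s := by
  obtain ⟨M, hM⟩ := eventually_atTop.1 h
  refine ⟨∏ i ∈ range M, max 1 (ρ i / r), fun s hs => ?_⟩
  have hs' : ∀ i ∈ s, 0 ≤ ρ i / r := fun i hi => div_nonneg (hs i hi) hr.le
  have hlow : ∏ i ∈ s with i < M, ρ i / r ≤ ∏ i ∈ range M, max 1 (ρ i / r) :=
    calc ∏ i ∈ s with i < M, ρ i / r ≤ ∏ i ∈ s with i < M, max 1 (ρ i / r) :=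
          prod_le_prod (fun i hi => hs' i (mem_filter.1 hi).1) fun _ _ => le_max_right _ _
      _ ≤ ∏ i ∈ range M, max 1 (ρ i / r) :=
          prod_le_prod_of_subset_of_one_le (fun i hi => by simpa using (mem_filter.1 hi).2)
            (fun _ _ => zero_le_one.trans (le_max_left _ _)) fun _ _ _ => le_max_left _ _
  have hhigh : ∏ i ∈ s with ¬ i < M, ρ i / r ≤ 1 :=
    prod_le_one (fun i hi => hs' i (mem_filter.1 hi).1) fun i hi =>
      (div_le_one hr).2 (hM i (not_lt.1 (mem_filter.1 hi).2))
  calc ∏ i ∈ s, ρ i = r ^ #s * ∏ i ∈ s, ρ i / r := by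
        rw [prod_div_distrib, prod_const, mul_div_cancel₀ _ (pow_ne_zero _ hr.ne')]
    _ = r ^ #s * ((∏ i ∈ s with i < M, ρ i / r) * ∏ i ∈ s with ¬ i < M, ρ i / r) := by
        rw [prod_filter_mul_prod_filter_not]
    _ ≤ r ^ #s * ((∏ i ∈ range M, max 1 (ρ i / r)) * 1) := by
        gcongr
        exact prod_nonneg fun i hi => hs' i (mem_filter.1 hi).1
    _ = _ := by ring

theorem ENNReal.tsum_tsum_pow_mul_add_le (r : ENNReal) (u : ℕ → ENNReal) :
    ∑' n, ∑' k, r ^ k * u (n + k) ≤ (1 - r)⁻¹ * ∑' n, u n := by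
  rw [ENNReal.tsum_comm, ← ENNReal.tsum_geometric, ← ENNReal.tsum_mul_right]
  refine ENNReal.tsum_le_tsum fun k => ?_
  rw [ENNReal.tsum_mul_left]
  exact mul_le_mul_right (ENNReal.tsum_comp_le_tsum_of_injective (add_left_injective k) u) _

theorem sum_Icc_sub_sub_one (f : ℝ → ℝ) (n : ℕ) :
    ∑ ℓ ∈ Icc 1 n, (f ℓ - f ((ℓ : ℝ) - 1)) = f n - f 0 := by
  induction n with
  | zero => simp
  | succ n ih =>
    rw [sum_Icc_succ_top (by omega), ih]
    push_cast
    ring_nf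

theorem neg_sub_le_sum_Icc_max_neg (f : ℝ → ℝ) (n : ℕ) :
    -(f n - f 0) ≤ ∑ ℓ ∈ Icc 1 n, max (-(f ℓ - f ((ℓ : ℝ) - 1))) 0 := by
  rw [← sum_Icc_sub_sub_one, ← sum_neg_distrib]
  exact sum_le_sum fun _ _ => le_max_left _ _

section OneSidedLipschitz

variable {f : ℝ → ℝ} {θ : ℝ}

theorem monotoneOn_mul_sub_of_add_sub_le
    (hf : ∀ x ≥ (0 : ℝ), ∀ y ≥ (0 : ℝ), f (x + y) - f y ≤ θ * x) :
    MonotoneOn (fun x => θ * x - f x) (Ici 0) := fun s hs t _ hst => by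
  have := hf (t - s) (sub_nonneg.2 hst) s hs
  rw [sub_add_cancel] at this
  dsimp only
  linarith

theorem neg_of_lintegral_one_div_abs_lt_top (hg : MonotoneOn (fun x => θ * x - f x) (Ici 0))
    (hf0 : f 0 = 0) (hf_cont : ContinuousOn f (Ici 0)) {a₀ : ℝ} (ha₀ : 0 < a₀)
    (hfne : ∀ x ≥ a₀, f x ≠ 0)
    (hint : ∫⁻ x in Ici a₀, ENNReal.ofReal (1 / |f x|) < ⊤) : ∀ x ≥ a₀, f x < 0 := by
  by_contra! ⟨x₀, hx₀, hfx₀⟩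
  replace hfx₀ : 0 < f x₀ := hfx₀.lt_of_ne' (hfne x₀ hx₀)
  have hle : ∀ x ≥ 0, f x ≤ θ * x := fun x hx => by
    have := hg self_mem_Ici hx hx
    simp only [mul_zero, hf0] at this
    linarith
  have hpos : ∀ y ≥ x₀, 0 < f y := fun y hy => by
    by_contra! hfy
    obtain ⟨z, hz, hfz⟩ := intermediate_value_Icc' hy
      (hf_cont.mono fun z hz => le_trans (by linarith) hz.1) ⟨hfy, hfx₀.le⟩
    exact hfne z (hx₀.trans hz.1) hfz
  have hθ : 0 < θ := by nlinarith [hle x₀ (by linarith)]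
  have hsum : Summable fun n : ℕ => 1 / (θ * (n + 1)) := by
    refine summable_of_le_on_Ico ⌈x₀⌉₊ (fun n => by positivity) (fun n hn x hx => ?_)
      ((lintegral_mono_set (Set.Ici_subset_Ici.2 (hx₀.trans (Nat.le_ceil x₀)))).trans_lt hint)
    have hx₀x : x₀ ≤ x := (Nat.le_ceil x₀).trans ((Nat.cast_le.2 hn).trans hx.1)
    rw [abs_of_pos (hpos x hx₀x)]
    exact one_div_le_one_div_of_le (hpos x hx₀x)
      ((hle x (by linarith)).trans (mul_le_mul_of_nonneg_left hx.2.le hθ.le))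
  apply Real.not_summable_one_div_natCast
  rw [← summable_nat_add_iff 1]
  refine (hsum.mul_left θ).congr fun n => ?_
  push_cast
  field_simp

theorem summable_one_div_mul_sub (hθ : 0 ≤ θ) (hg : MonotoneOn (fun x => θ * x - f x) (Ici 0))
    (hf0 : f 0 = 0) {a₀ : ℝ} (ha₀ : 0 < a₀) (hneg : ∀ x ≥ a₀, f x < 0)
    (hint : ∫⁻ x in Ici a₀, ENNReal.ofReal (1 / |f x|) < ⊤) :
    Summable fun n : ℕ => 1 / (θ * n - f n) := by
  have hnonneg : ∀ x ≥ 0, 0 ≤ θ * x - f x := fun x hx => by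
    simpa [hf0] using hg self_mem_Ici hx hx
  rw [← summable_nat_add_iff 1]
  refine summable_of_le_on_Ico ⌈a₀⌉₊ (fun n => one_div_nonneg.2 (hnonneg _ (by positivity)))
    (fun n hn x hx => ?_)
    ((lintegral_mono_set (Set.Ici_subset_Ici.2 (Nat.le_ceil a₀))).trans_lt hint)
  have ha₀x : a₀ ≤ x := (Nat.le_ceil a₀).trans ((Nat.cast_le.2 hn).trans hx.1)
  have hx0 : 0 ≤ x := by linarith
  -- `|f x| = -f x ≤ θ x - f x`, and the latter is nondecreasing
  rw [abs_of_neg (hneg x ha₀x)]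
  refine one_div_le_one_div_of_le (by linarith [hneg x ha₀x]) ?_
  have := hg hx0 (by positivity : (0 : ℝ) ≤ (n + 1 : ℕ)) (by push_cast; linarith [hx.2])
  dsimp only at this
  linarith [mul_nonneg hθ hx0]

theorem eventually_mul_le_mul_sub (hθ : 0 ≤ θ) (hg : MonotoneOn (fun x => θ * x - f x) (Ici 0))
    {a₀ : ℝ} (hneg : ∀ x ≥ a₀, f x < 0) (hs : Summable fun n : ℕ => 1 / (θ * n - f n))
    {c : ℝ} (hc : 0 < c) : ∀ᶠ n : ℕ in atTop, c * n ≤ θ * n - f n := by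
  have hGpos : ∀ n : ℕ, a₀ ≤ n → 0 < θ * n - f n := fun n hn => by
    nlinarith [hneg n hn, n.cast_nonneg (α := ℝ)]
  have hdiv : Tendsto (fun n : ℕ => (n : ℝ) / (θ * n - f n)) atTop (𝓝 0) :=
    Monotone.tendsto_natCast_div_of_summable_one_div
      (fun m n hmn => hg (Set.mem_Ici.2 m.cast_nonneg) (Set.mem_Ici.2 n.cast_nonneg)
        (Nat.cast_le.2 hmn)) (hGpos _ (Nat.le_ceil a₀)) hs
  filter_upwards [hdiv.eventually (gt_mem_nhds (inv_pos.2 hc)), eventually_ge_atTop ⌈a₀⌉₊]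
    with n hn hna
  have hG := hGpos n (Nat.ceil_le.1 hna)
  rw [div_lt_iff₀ hG, ← div_eq_inv_mul, lt_div_iff₀ hc] at hn
  linarith

theorem sum_Icc_max_sub_le (hθ : 0 ≤ θ) (hg : MonotoneOn (fun x => θ * x - f x) (Ici 0))
    (n : ℕ) : ∑ ℓ ∈ Icc 1 n, max (f ℓ - f ((ℓ : ℝ) - 1)) 0 ≤ θ * n := by
  calc ∑ ℓ ∈ Icc 1 n, max (f ℓ - f ((ℓ : ℝ) - 1)) 0 ≤ ∑ ℓ ∈ Icc 1 n, θ := by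
        refine sum_le_sum fun ℓ hℓ => max_le ?_ hθ
        have hℓ : (1 : ℝ) ≤ ℓ := by exact_mod_cast (mem_Icc.1 hℓ).1
        have := hg (by simpa using hℓ : (0 : ℝ) ≤ ℓ - 1) (by positivity : (0 : ℝ) ≤ ℓ)
          (by linarith)
        dsimp only at this
        linarith
    _ = θ * n := by simp [mul_comm]

end OneSidedLipschitz

section PotentialCoefficients

variable {lamn mun P : ℕ → ℝ}

theorem potential_eq_mul_prod
    (hPn : ∀ n : ℕ, 2 ≤ n →
      P n = (∏ i ∈ Finset.Icc 1 n, lamn i) / (∏ i ∈ Finset.Icc 2 n, mun i))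
    {m : ℕ} (hm : 2 ≤ m) : P m = lamn 1 * ∏ i ∈ Ioc 1 m, lamn i / mun i := by
  have hIcc : Finset.Icc 1 m = insert 1 (Finset.Ioc 1 m) := by
    ext i
    simp only [Finset.mem_Icc, Finset.mem_insert, Finset.mem_Ioc]
    omega
  have hIcc2 : Finset.Icc 2 m = Finset.Ioc 1 m := Finset.Icc_add_one_left_eq_Ioc 1 m
  rw [hPn m hm, hIcc, prod_insert (by simp), hIcc2, prod_div_distrib, mul_div_assoc]

theorem prod_Ioc_div_pos (hlamn : ∀ n, 1 ≤ n → 0 < lamn n)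
    (hmun : ∀ n, 1 ≤ n → 0 < mun n) (m K : ℕ) : 0 < ∏ i ∈ Ioc (m + 1) K, lamn i / mun i :=
  prod_pos fun i hi => by
    have := (Finset.mem_Ioc.1 hi).1
    exact div_pos (hlamn i (by omega)) (hmun i (by omega))

-- `π₁ = 1` rather than `λ₁`, whence the factor `max 1 λ₁`.
theorem potential_le_mul_prod (hlamn : ∀ n, 1 ≤ n → 0 < lamn n)
    (hmun : ∀ n, 1 ≤ n → 0 < mun n) (hP1 : P 1 = 1)
    (hPn : ∀ n : ℕ, 2 ≤ n →
      P n = (∏ i ∈ Finset.Icc 1 n, lamn i) / (∏ i ∈ Finset.Icc 2 n, mun i))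
    {m K : ℕ} (hm : 1 ≤ m) (hmK : m ≤ K) :
    P K ≤ max 1 (lamn 1) * (P m * ∏ i ∈ Ioc m K, lamn i / mun i) := by
  obtain rfl | hm := hm.eq_or_lt
  · obtain rfl | hK := hmK.eq_or_lt
    · simp [hP1]
    rw [hP1, one_mul, potential_eq_mul_prod hPn hK]
    exact mul_le_mul_of_nonneg_right (le_max_right _ _) (prod_Ioc_div_pos hlamn hmun 0 K).le
  · rw [potential_eq_mul_prod hPn (hm.trans_le hmK), potential_eq_mul_prod hPn hm, mul_assoc,
      prod_Ioc_consecutive _ hm.le hmK]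
    exact le_mul_of_one_le_left
      (mul_nonneg (hlamn 1 le_rfl).le (prod_Ioc_div_pos hlamn hmun 0 K).le) (le_max_left _ _)

theorem potential_pos (hlamn : ∀ n, 1 ≤ n → 0 < lamn n)
    (hmun : ∀ n, 1 ≤ n → 0 < mun n) (hP1 : P 1 = 1)
    (hPn : ∀ n : ℕ, 2 ≤ n →
      P n = (∏ i ∈ Finset.Icc 1 n, lamn i) / (∏ i ∈ Finset.Icc 2 n, mun i))
    {m : ℕ} (hm : 1 ≤ m) : 0 < P m := by
  obtain rfl | hm := hm.eq_or_lt
  · simp [hP1]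
  rw [potential_eq_mul_prod hPn hm]
  exact mul_pos (hlamn 1 le_rfl) (prod_Ioc_div_pos hlamn hmun 0 m)

theorem one_div_potential_mul_le (hlamn : ∀ n, 1 ≤ n → 0 < lamn n)
    (hmun : ∀ n, 1 ≤ n → 0 < mun n) (hP1 : P 1 = 1)
    (hPn : ∀ n : ℕ, 2 ≤ n →
      P n = (∏ i ∈ Finset.Icc 1 n, lamn i) / (∏ i ∈ Finset.Icc 2 n, mun i))
    {m : ℕ} (hm : 1 ≤ m) (k : ℕ) :
    1 / P m * (P (m + k + 1) / lamn (m + k + 1)) ≤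
      max 1 (lamn 1) * (∏ i ∈ Ioc m (m + k), lamn i / mun i) * (1 / mun (m + k + 1)) := by
  have hPm := potential_pos hlamn hmun hP1 hPn hm
  have hlK := hlamn (m + k + 1) (by omega)
  have hmK := hmun (m + k + 1) (by omega)
  calc 1 / P m * (P (m + k + 1) / lamn (m + k + 1))
      ≤ 1 / P m * (max 1 (lamn 1) * (P m * ∏ i ∈ Ioc m (m + k + 1), lamn i / mun i)
          / lamn (m + k + 1)) := by
        gcongr
        exact potential_le_mul_prod hlamn hmun hP1 hPn hm (by omega)
    _ = _ := by
        rw [prod_Ioc_succ_top (by omega)]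
        field_simp

theorem tsum_potential_lt_top (hlamn : ∀ n, 1 ≤ n → 0 < lamn n)
    (hmun : ∀ n, 1 ≤ n → 0 < mun n) (hP1 : P 1 = 1)
    (hPn : ∀ n : ℕ, 2 ≤ n →
      P n = (∏ i ∈ Finset.Icc 1 n, lamn i) / (∏ i ∈ Finset.Icc 2 n, mun i))
    {r : ℝ} (hr0 : 0 < r) (hr1 : r < 1) (hρ : ∀ᶠ n in atTop, lamn n / mun n ≤ r)
    (hsum : Summable fun n => 1 / mun n) :
    (∑' n : ℕ, ENNReal.ofReal (1 / P (n + 1)) *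
      ∑' k : ℕ, ENNReal.ofReal (P (n + 2 + k) / lamn (n + 2 + k))) < ⊤ := by
  obtain ⟨C, hC⟩ := exists_prod_le_mul_pow_card hr0 hρ
  set u : ℕ → ENNReal := fun j => ENNReal.ofReal (1 / mun (j + 2))
  have hterm : ∀ n k, ENNReal.ofReal (1 / P (n + 1)) *
      ENNReal.ofReal (P (n + 2 + k) / lamn (n + 2 + k)) ≤
        ENNReal.ofReal (max 1 (lamn 1) * C) * (ENNReal.ofReal r ^ k * u (n + k)) := by
    intro n k
    have hPn1 := potential_pos hlamn hmun hP1 hPn (m := n + 1) (by omega)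
    have hC0 : 0 ≤ C := zero_le_one.trans (by simpa using hC ∅)
    rw [← ENNReal.ofReal_mul (by positivity), ← ENNReal.ofReal_pow hr0.le,
      ← ENNReal.ofReal_mul (by positivity), ← ENNReal.ofReal_mul (by positivity)]
    refine ENNReal.ofReal_le_ofReal ?_
    have hidx : n + 2 + k = n + 1 + k + 1 := by omega
    calc 1 / P (n + 1) * (P (n + 2 + k) / lamn (n + 2 + k))
        ≤ max 1 (lamn 1) * (∏ i ∈ Ioc (n + 1) (n + 1 + k), lamn i / mun i) *
            (1 / mun (n + 1 + k + 1)) := by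
          rw [hidx]; exact one_div_potential_mul_le hlamn hmun hP1 hPn (by omega) k
      _ ≤ max 1 (lamn 1) * (C * r ^ k) * (1 / mun (n + 1 + k + 1)) := by
          gcongr
          · exact (one_div_pos.2 (hmun _ (by omega))).le
          · simpa using hC (Ioc (n + 1) (n + 1 + k)) fun i hi => by
              have hi := (Finset.mem_Ioc.1 hi).1
              exact div_nonneg (hlamn i (by omega)).le (hmun i (by omega)).le
      _ = _ := by rw [show n + 1 + k + 1 = n + k + 2 by omega]; ring
  have hu : ∑' j, u j < ⊤ := ((summable_nat_add_iff 2).2 hsum).tsum_ofReal_lt_top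
  calc _ = ∑' n, ∑' k, ENNReal.ofReal (1 / P (n + 1)) *
          ENNReal.ofReal (P (n + 2 + k) / lamn (n + 2 + k)) := by
        simp_rw [ENNReal.tsum_mul_left]
    _ ≤ ∑' n, ∑' k,
          ENNReal.ofReal (max 1 (lamn 1) * C) * (ENNReal.ofReal r ^ k * u (n + k)) :=
        ENNReal.tsum_le_tsum fun n => ENNReal.tsum_le_tsum fun k => hterm n k
    _ ≤ ENNReal.ofReal (max 1 (lamn 1) * C) * ((1 - ENNReal.ofReal r)⁻¹ * ∑' j, u j) := by
        simp_rw [ENNReal.tsum_mul_left]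
        gcongr
        exact ENNReal.tsum_tsum_pow_mul_add_le _ u
    _ < ⊤ := ENNReal.mul_lt_top ENNReal.ofReal_lt_top (ENNReal.mul_lt_top
        (ENNReal.inv_lt_top.2 (tsub_pos_of_lt (ENNReal.ofReal_lt_one.2 hr1))) hu)

end PotentialCoefficients

/-- Under (H1), `λ, μ > 0`, `f x ≠ 0` for `x ≥ a₀`, if
`∫_{a₀}^∞ 1/|f x| dx < ∞` then `S = Σ_{n≥1} (1/π_n) Σ_{k≥n+1} π_k/λ_k < ∞`. -/
theorem stmt7 (f : ℝ → ℝ) (θ : ℝ) (hθ : 0 ≤ θ)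
    (hf_cont : ContinuousOn f (Ici 0)) (hf0 : f 0 = 0)
    (hH1 : ∀ x ≥ (0:ℝ), ∀ y ≥ (0:ℝ), f (x + y) - f y ≤ θ * x)
    (lam mu : ℝ) (hlam : 0 < lam) (hmu : 0 < mu)
    (a₀ : ℝ) (ha₀ : 0 < a₀) (hfne : ∀ x ≥ a₀, f x ≠ 0)
    (lamn mun : ℕ → ℝ)
    (hlamn : ∀ n : ℕ, lamn n = lam * n + ∑ ℓ ∈ Finset.Icc 1 n, max (f ℓ - f ((ℓ : ℝ) - 1)) 0)
    (hmun : ∀ n : ℕ, mun n = mu * n + ∑ ℓ ∈ Finset.Icc 1 n, max (-(f ℓ - f ((ℓ : ℝ) - 1))) 0)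
    (P : ℕ → ℝ) (hP1 : P 1 = 1)
    (hPn : ∀ n : ℕ, 2 ≤ n →
      P n = (∏ i ∈ Finset.Icc 1 n, lamn i) / (∏ i ∈ Finset.Icc 2 n, mun i))
    (hint : (∫⁻ x in Ici a₀, ENNReal.ofReal (1 / |f x|)) < ⊤) :
    (∑' n : ℕ, ENNReal.ofReal (1 / P (n + 1)) *
      ∑' k : ℕ, ENNReal.ofReal (P (n + 2 + k) / lamn (n + 2 + k))) < ⊤ := by
  have hg := monotoneOn_mul_sub_of_add_sub_le hH1
  have hneg := neg_of_lintegral_one_div_abs_lt_top hg hf0 hf_cont ha₀ hfne hint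
  have hsum := summable_one_div_mul_sub hθ hg hf0 ha₀ hneg hint
  have hlamn_le : ∀ n : ℕ, lamn n ≤ (lam + θ) * n := fun n => by
    linarith [hlamn n, sum_Icc_max_sub_le hθ hg n]
  have hmun_ge : ∀ n : ℕ, mu * n - f n ≤ mun n := fun n => by
    linarith [hmun n, neg_sub_le_sum_Icc_max_neg f n]
  have hlamn_pos : ∀ n, 1 ≤ n → 0 < lamn n := fun n hn => by
    rw [hlamn]
    exact add_pos_of_pos_of_nonneg (by positivity) (sum_nonneg fun _ _ => le_max_right _ _)
  have hmun_pos : ∀ n, 1 ≤ n → 0 < mun n := fun n hn => by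
    rw [hmun]
    exact add_pos_of_pos_of_nonneg (by positivity) (sum_nonneg fun _ _ => le_max_right _ _)
  have hbig := eventually_mul_le_mul_sub hθ hg hneg hsum (c := 4 * (lam + θ)) (by positivity)
  refine tsum_potential_lt_top hlamn_pos hmun_pos hP1 hPn one_half_pos one_half_lt_one ?_ ?_
  · filter_upwards [hbig, eventually_ge_atTop 1] with n hn hn1
    rw [div_le_iff₀ (hmun_pos n hn1)]
    nlinarith [hlamn_le n, hmun_ge n, n.cast_nonneg (α := ℝ)]
  · refine (hsum.mul_left 2).of_norm_bounded_eventually_nat ?_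
    filter_upwards [hbig, eventually_ge_atTop 1] with n hn hn1
    have hG : 0 < θ * n - f n := lt_of_lt_of_le (by positivity) hn
    rw [Real.norm_of_nonneg (one_div_nonneg.2 (hmun_pos n hn1).le), mul_one_div,
      div_le_div_iff₀ (hmun_pos n hn1) hG]
    nlinarith [hmun_ge n, n.cast_nonneg (α := ℝ)]
end

section
/- Let f : [0,∞) → ℝ satisfy (H1), let μ > 0, and suppose there exists a₀ > 0 such that f(x) ≠ 0 for all x ≥ a₀. Then the series Σ_{n≥1} 1/(μ·n + F⁻(n)) diverges if and only if ∫_{a₀}^∞ 1/|f(x)| dx = ∞. -/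
/-!
Write `a n = μ (n + 1) + F⁻(n + 1)`. Since `f 0 = 0` and (H1) bounds every unit increment of `f`
by `θ`, `F⁻(j)` lies between `-f j` and `-f j + θ j`, so `a n` is pinned between
`μ (n + 1) - f (n + 1)` and `(μ + θ) (n + 1) - f (n + 1)`.

If the series diverges, the integral does: on `[n, n + 1]`, (H1) gives `|f x| ≤ (1 + θ / μ) a n`.

If the series converges, then `-f n ≥ n` for all large `n`: otherwise (H1) would give
`a k ≤ C n` for every `k < n`, and the blocks `∑_{n/2 ≤ k < n} 1 / a k ≥ 1 / (2C)` would contradict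
the Cauchy criterion. Then on `[n + 1, n + 2]` we get `a n ≤ 2 (μ + θ + 1) |f x|`, so the tail of
the integral is bounded by the series, while on the remaining compact piece `1 / |f|` is continuous.
-/

open MeasureTheory Set Filter Topology
open scoped ENNReal

/-- Hypothesis (H1), without the continuity and `f 0 = 0` parts. -/
def HasIncrementBound (f : ℝ → ℝ) (θ : ℝ) : Prop :=
  ∀ x ≥ (0 : ℝ), ∀ y ≥ (0 : ℝ), f (x + y) - f y ≤ θ * x

section IncrementBound

variable {f : ℝ → ℝ} {θ : ℝ}

lemma HasIncrementBound.sub_le (h : HasIncrementBound f θ) {x y : ℝ} (hy : 0 ≤ y)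
    (hyx : y ≤ x) : f x - f y ≤ θ * (x - y) := by
  simpa using h (x - y) (sub_nonneg.2 hyx) y hy

lemma HasIncrementBound.sub_le_of_le_add_one (h : HasIncrementBound f θ) (hθ : 0 ≤ θ)
    {x y : ℝ} (hy : 0 ≤ y) (hyx : y ≤ x) (hxy : x ≤ y + 1) : f x - f y ≤ θ :=
  (h.sub_le hy hyx).trans (mul_le_of_le_one_right hθ (by linarith))

lemma HasIncrementBound.le_mul_self (h : HasIncrementBound f θ) (hf0 : f 0 = 0) {x : ℝ}
    (hx : 0 ≤ x) : f x ≤ θ * x := by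
  simpa [hf0] using h.sub_le le_rfl hx

end IncrementBound

/-- The quantity `F⁻(j)` of the statement. -/
def negVariation (f : ℝ → ℝ) (j : ℕ) : ℝ :=
  ∑ ℓ ∈ Finset.Icc 1 j, max (-(f ℓ - f ((ℓ : ℝ) - 1))) 0

section NegVariation

variable {f : ℝ → ℝ} {θ : ℝ}

lemma negVariation_nonneg (f : ℝ → ℝ) (j : ℕ) : 0 ≤ negVariation f j :=
  Finset.sum_nonneg fun _ _ => le_max_right _ _

lemma negVariation_zero (f : ℝ → ℝ) : negVariation f 0 = 0 := by
  simp [negVariation]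

lemma negVariation_succ (f : ℝ → ℝ) (j : ℕ) :
    negVariation f (j + 1) = negVariation f j + max (-(f (j + 1) - f j)) 0 := by
  rw [negVariation, negVariation, Finset.sum_Icc_succ_top (by omega)]
  push_cast
  rw [add_sub_cancel_right]

lemma neg_le_negVariation (hf0 : f 0 = 0) (j : ℕ) : -f j ≤ negVariation f j := by
  induction j with
  | zero => simp [hf0, negVariation_zero]
  | succ j ih =>
    rw [negVariation_succ]
    push_cast
    linarith [le_max_left (-(f (j + 1) - f j)) 0]

lemma negVariation_le (h : HasIncrementBound f θ) (hθ : 0 ≤ θ) (hf0 : f 0 = 0) (j : ℕ) :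
    negVariation f j ≤ -f j + θ * j := by
  induction j with
  | zero => simp [hf0, negVariation_zero]
  | succ j ih =>
    have hstep := h.sub_le_of_le_add_one hθ j.cast_nonneg
      (le_add_of_nonneg_right zero_le_one) le_rfl
    have hmax : max (-(f (j + 1) - f j)) 0 ≤ -(f (j + 1) - f j) + θ :=
      max_le (by linarith) (by linarith)
    rw [negVariation_succ]
    push_cast
    linarith

end NegVariation

lemma Summable.tendsto_sum_Ico_half {b : ℕ → ℝ} (hb : Summable b) :
    Tendsto (fun n => ∑ k ∈ Finset.Ico (n / 2) n, b k) atTop (𝓝 0) := by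
  have hS := hb.hasSum.tendsto_sum_nat
  have h := hS.sub (hS.comp (Nat.tendsto_div_const_atTop two_ne_zero))
  rw [sub_self] at h
  exact h.congr fun n => (Finset.sum_Ico_eq_sub _ (Nat.div_le_self n 2)).symm

lemma Summable.eventually_exists_lt_div {b : ℕ → ℝ} (hb : Summable b) {c : ℝ} (hc : 0 < c) :
    ∀ᶠ n : ℕ in atTop, ∃ k ∈ Finset.Ico (n / 2) n, b k < c / n := by
  filter_upwards [hb.tendsto_sum_Ico_half.eventually (gt_mem_nhds (half_pos hc)),
    eventually_gt_atTop 0] with n hsum hn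
  by_contra! hge
  have hn' : (0 : ℝ) < n := by exact_mod_cast hn
  have hcard : (n : ℝ) ≤ 2 * ((n - n / 2 : ℕ) : ℝ) := by
    exact_mod_cast (by omega : n ≤ 2 * (n - n / 2))
  have : c / 2 ≤ ∑ k ∈ Finset.Ico (n / 2) n, b k :=
    calc c / 2 ≤ ((n - n / 2 : ℕ) : ℝ) * (c / n) := by
          rw [mul_div_assoc', le_div_iff₀ hn']
          nlinarith
      _ = ∑ _k ∈ Finset.Ico (n / 2) n, c / n := by simp
      _ ≤ _ := Finset.sum_le_sum hge
  linarith

section UnitIntervals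

lemma Ici_natCast_eq_iUnion_Ico (N : ℕ) :
    Ici (N : ℝ) = ⋃ n : ℕ, Ico ((n + N : ℕ) : ℝ) ((n + N : ℕ) + 1) := by
  ext x
  simp only [mem_Ici, mem_iUnion, mem_Ico]
  constructor
  · intro hx
    have hN : N ≤ ⌊x⌋₊ := Nat.le_floor hx
    refine ⟨⌊x⌋₊ - N, ?_, ?_⟩ <;> rw [Nat.sub_add_cancel hN]
    · exact Nat.floor_le ((Nat.cast_nonneg N).trans hx)
    · exact Nat.lt_floor_add_one x
  · rintro ⟨n, hn, -⟩
    exact le_trans (by exact_mod_cast Nat.le_add_left N n) hn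

lemma lintegral_Ici_natCast_eq_tsum (N : ℕ) (h : ℝ → ℝ≥0∞) :
    ∫⁻ x in Ici (N : ℝ), h x =
      ∑' n : ℕ, ∫⁻ x in Ico ((n + N : ℕ) : ℝ) ((n + N : ℕ) + 1), h x := by
  rw [Ici_natCast_eq_iUnion_Ico]
  refine lintegral_iUnion (fun _ => measurableSet_Ico) ?_ h
  intro i j hij
  exact_mod_cast pairwise_disjoint_Ico_intCast ℝ (show ((i + N : ℕ) : ℤ) ≠ (j + N : ℕ) by omega)

lemma setLIntegral_Ico_add_one_const (a : ℝ) (c : ℝ≥0∞) : ∫⁻ _ in Ico a (a + 1), c = c := by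
  simp [Real.volume_Ico]

variable {h : ℝ → ℝ≥0∞} {u : ℕ → ℝ≥0∞} {N : ℕ}

lemma tsum_le_lintegral_Ici_natCast (hu : ∀ n ≥ N, ∀ x ∈ Ico (n : ℝ) (n + 1), u n ≤ h x) :
    ∑' n, u (n + N) ≤ ∫⁻ x in Ici (N : ℝ), h x := by
  rw [lintegral_Ici_natCast_eq_tsum]
  refine ENNReal.tsum_le_tsum fun n => ?_
  rw [← setLIntegral_Ico_add_one_const _ (u (n + N))]
  exact setLIntegral_mono' measurableSet_Ico (hu _ (Nat.le_add_left N n))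

lemma lintegral_Ici_natCast_le_tsum (hu : ∀ n ≥ N, ∀ x ∈ Ico (n : ℝ) (n + 1), h x ≤ u n) :
    ∫⁻ x in Ici (N : ℝ), h x ≤ ∑' n, u (n + N) := by
  rw [lintegral_Ici_natCast_eq_tsum]
  refine ENNReal.tsum_le_tsum fun n => ?_
  rw [← setLIntegral_Ico_add_one_const _ (u (n + N))]
  exact setLIntegral_mono' measurableSet_Ico (hu _ (Nat.le_add_left N n))

end UnitIntervals

lemma lintegral_Ici_ofReal_ne_top_of_tail {g : ℝ → ℝ} {a b : ℝ} (hab : a ≤ b)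
    (hg : ContinuousOn g (Icc a b)) (htail : ∫⁻ x in Ici b, ENNReal.ofReal (g x) ≠ ⊤) :
    ∫⁻ x in Ici a, ENNReal.ofReal (g x) ≠ ⊤ := by
  rw [← Icc_union_Ici_eq_Ici hab]
  exact ne_top_of_le_ne_top
    (ENNReal.add_ne_top.2 ⟨hg.integrableOn_Icc.lintegral_lt_top.ne, htail⟩)
    (lintegral_union_le _ _ _)

lemma ENNReal.tsum_ofReal_eq_top_iff {α : Type*} {u : α → ℝ} (hu : ∀ i, 0 ≤ u i) :
    ∑' i, ENNReal.ofReal (u i) = ⊤ ↔ ¬ Summable u := by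
  have hcoe : (fun i => ((u i).toNNReal : ℝ)) = u := funext fun i => Real.coe_toNNReal _ (hu i)
  conv_rhs => rw [← hcoe]
  exact ENNReal.tsum_coe_eq_top_iff_not_summable_coe

section Comparison

variable {f : ℝ → ℝ} {θ μ a₀ : ℝ} {a : ℕ → ℝ}

lemma eventually_le_neg_of_summable_inv (h : HasIncrementBound f θ) (hθ : 0 ≤ θ) (hμ : 0 < μ)
    (hμa : ∀ n : ℕ, μ * (n + 1) ≤ a n) (haf : ∀ n : ℕ, a n ≤ (μ + θ) * (n + 1) - f (n + 1))
    (hs : Summable fun n => 1 / a n) : ∀ᶠ n : ℕ in atTop, (n : ℝ) ≤ -f n := by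
  set C := μ + 2 * θ + 1
  have hC : 0 < C := by positivity
  filter_upwards [hs.eventually_exists_lt_div (one_div_pos.2 hC)] with n ⟨k, hk, hlt⟩
  by_contra! hdip
  have hkn : (k : ℝ) + 1 ≤ n := by exact_mod_cast (Finset.mem_Ico.1 hk).2
  have hfk := h.sub_le (by positivity) hkn
  have hak : a k ≤ C * n := by
    nlinarith [haf k, mul_nonneg (add_nonneg hμ.le hθ) (sub_nonneg.2 hkn),
      mul_nonneg hθ (k.cast_nonneg : (0 : ℝ) ≤ k)]
  have hpos : 0 < a k := lt_of_lt_of_le (by positivity) (hμa k)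
  rw [div_div] at hlt
  linarith [one_div_le_one_div_of_le hpos hak]

lemma abs_le_mul_of_mem_Icc (h : HasIncrementBound f θ) (hθ : 0 ≤ θ) (hμ : 0 < μ)
    (hf0 : f 0 = 0) (hμa : ∀ n : ℕ, μ * (n + 1) ≤ a n)
    (hfa : ∀ n : ℕ, μ * (n + 1) - f (n + 1) ≤ a n) {n : ℕ} {x : ℝ}
    (hx : x ∈ Icc (n : ℝ) (n + 1)) : |f x| ≤ (1 + θ / μ) * a n := by
  obtain ⟨hnx, hxn⟩ := hx
  have hx0 : 0 ≤ x := n.cast_nonneg.trans hnx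
  have hθa : θ * (n + 1) ≤ θ / μ * a n :=
    calc θ * (n + 1) = θ / μ * (μ * (n + 1)) := by field_simp
      _ ≤ θ / μ * a n := mul_le_mul_of_nonneg_left (hμa n) (by positivity)
  have ha0 : 0 ≤ a n := le_trans (by positivity) (hμa n)
  rw [abs_le']
  constructor
  · nlinarith [h.le_mul_self hf0 hx0]
  · nlinarith [h.sub_le_of_le_add_one hθ hx0 hxn (by linarith), hfa n,
      mul_nonneg hθ n.cast_nonneg]

lemma le_mul_abs_of_mem_Icc (h : HasIncrementBound f θ) (hθ : 0 ≤ θ) (hμ : 0 < μ)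
    (haf : ∀ n : ℕ, a n ≤ (μ + θ) * (n + 1) - f (n + 1)) {n : ℕ} (hθn : 2 * θ ≤ n + 1)
    (hfn : (n : ℝ) + 1 ≤ -f (n + 1)) {x : ℝ} (hx : x ∈ Icc ((n : ℝ) + 1) (n + 2)) :
    a n ≤ 2 * (μ + θ + 1) * |f x| := by
  obtain ⟨hnx, hxn⟩ := hx
  have hfx := h.sub_le_of_le_add_one hθ (by positivity) hnx (by linarith)
  have hfx' : -f (n + 1) ≤ 2 * |f x| := by linarith [neg_le_abs (f x)]
  nlinarith [haf n, mul_le_mul_of_nonneg_left hfn (add_nonneg hμ.le hθ)]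

lemma lintegral_inv_abs_eq_top_of_not_summable (h : HasIncrementBound f θ) (hθ : 0 ≤ θ)
    (hμ : 0 < μ) (hf0 : f 0 = 0) (hfne : ∀ x ≥ a₀, f x ≠ 0)
    (hμa : ∀ n : ℕ, μ * (n + 1) ≤ a n) (hfa : ∀ n : ℕ, μ * (n + 1) - f (n + 1) ≤ a n)
    (hns : ¬ Summable fun n => 1 / a n) :
    ∫⁻ x in Ici a₀, ENNReal.ofReal (1 / |f x|) = ⊤ := by
  set N := ⌈a₀⌉₊
  set D := 1 + θ / μ
  have hD : 0 < D := by positivity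
  have ha : ∀ n, 0 < a n := fun n => lt_of_lt_of_le (by positivity) (hμa n)
  have hshift : ¬ Summable fun n => 1 / (D * a (n + N)) := fun hs => hns <|
    (summable_nat_add_iff N).1 ((hs.mul_left D).congr fun n => by
      rw [mul_one_div, div_mul_cancel_left₀ hD.ne', one_div])
  rw [← top_le_iff, ← (ENNReal.tsum_ofReal_eq_top_iff fun n =>
    (one_div_pos.2 (mul_pos hD (ha _))).le).2 hshift]
  calc ∑' n, ENNReal.ofReal (1 / (D * a (n + N)))
      ≤ ∫⁻ x in Ici (N : ℝ), ENNReal.ofReal (1 / |f x|) :=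
        tsum_le_lintegral_Ici_natCast (u := fun n => ENNReal.ofReal (1 / (D * a n)))
          fun n hn x hx => ?_
    _ ≤ _ := lintegral_mono_set (Ici_subset_Ici.2 (Nat.le_ceil a₀))
  have hfx : 0 < |f x| :=
    abs_pos.2 (hfne x ((Nat.le_ceil a₀).trans ((Nat.cast_le.2 hn).trans hx.1)))
  exact ENNReal.ofReal_le_ofReal (one_div_le_one_div_of_le hfx
    (abs_le_mul_of_mem_Icc h hθ hμ hf0 hμa hfa (Ico_subset_Icc_self hx)))

lemma lintegral_inv_abs_ne_top_of_summable (h : HasIncrementBound f θ) (hθ : 0 ≤ θ)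
    (hμ : 0 < μ) (ha₀ : 0 < a₀) (hcont : ContinuousOn f (Ici 0)) (hfne : ∀ x ≥ a₀, f x ≠ 0)
    (hμa : ∀ n : ℕ, μ * (n + 1) ≤ a n) (haf : ∀ n : ℕ, a n ≤ (μ + θ) * (n + 1) - f (n + 1))
    (hs : Summable fun n => 1 / a n) :
    ∫⁻ x in Ici a₀, ENNReal.ofReal (1 / |f x|) ≠ ⊤ := by
  set E := 2 * (μ + θ + 1)
  have ha : ∀ n, 0 < a n := fun n => lt_of_lt_of_le (by positivity) (hμa n)
  obtain ⟨K, hK⟩ := eventually_atTop.1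
    ((eventually_le_neg_of_summable_inv h hθ hμ hμa haf hs).and
      (tendsto_natCast_atTop_atTop.eventually_ge_atTop (max a₀ (2 * θ))))
  have ha₀K : a₀ ≤ K := (le_max_left _ _).trans (hK K le_rfl).2
  have hK0 : 0 < K := Nat.cast_pos.1 (ha₀.trans_le ha₀K)
  -- (H1) bounds how fast `f` can rise, not fall, so `[m, m + 1)` is compared with `a (m - 1)`.
  refine lintegral_Ici_ofReal_ne_top_of_tail ha₀K ?_ (ne_top_of_le_ne_top ?_
    (lintegral_Ici_natCast_le_tsum (u := fun m => ENNReal.ofReal (E / a (m - 1))) ?_))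
  · exact continuousOn_const.div (hcont.mono fun x hx => ha₀.le.trans hx.1).abs
      fun x hx => abs_ne_zero.2 (hfne x hx.1)
  · refine Summable.tsum_ofReal_ne_top
      (((summable_nat_add_iff (K - 1)).2 hs).mul_left E |>.congr fun n => ?_)
    rw [show n + K - 1 = n + (K - 1) by omega, mul_one_div]
  · intro m hm x hx
    obtain ⟨n, rfl⟩ : ∃ n, m = n + 1 := ⟨m - 1, by omega⟩
    obtain ⟨hfn, hθn⟩ := hK (n + 1) hm
    push_cast at hfn hθn hx
    have hfx : 0 < |f x| := abs_pos.2 (hfne x ((le_max_left _ _).trans (hθn.trans hx.1)))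
    refine ENNReal.ofReal_le_ofReal ((div_le_div_iff₀ hfx (ha n)).2 ?_)
    simpa using le_mul_abs_of_mem_Icc h hθ hμ haf ((le_max_right _ _).trans hθn) hfn
      (x := x) ⟨hx.1, by linarith [hx.2]⟩

end Comparison

/-- Under (H1), `μ > 0`, `f x ≠ 0` for `x ≥ a₀`:
`Σ_{n≥1} 1/(μ n + F⁻(n)) = ∞ ↔ ∫_{a₀}^∞ 1/|f x| dx = ∞`. -/
theorem stmt9 (f : ℝ → ℝ) (θ : ℝ) (hθ : 0 ≤ θ)
    (hf_cont : ContinuousOn f (Ici 0)) (hf0 : f 0 = 0)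
    (hH1 : ∀ x ≥ (0:ℝ), ∀ y ≥ (0:ℝ), f (x + y) - f y ≤ θ * x)
    (mu : ℝ) (hmu : 0 < mu)
    (a₀ : ℝ) (ha₀ : 0 < a₀) (hfne : ∀ x ≥ a₀, f x ≠ 0) :
    (∑' n : ℕ, ENNReal.ofReal
        (1 / (mu * (n + 1) +
          ∑ ℓ ∈ Finset.Icc 1 (n + 1), max (-(f ℓ - f ((ℓ : ℝ) - 1))) 0))) = ⊤ ↔
      (∫⁻ x in Ici a₀, ENNReal.ofReal (1 / |f x|)) = ⊤ := by
  set a : ℕ → ℝ := fun n => mu * (n + 1) + negVariation f (n + 1)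
  change ∑' n, ENNReal.ofReal (1 / a n) = ⊤ ↔ _
  have hμa : ∀ n : ℕ, mu * (n + 1) ≤ a n :=
    fun n => le_add_of_nonneg_right (negVariation_nonneg f _)
  have hfa : ∀ n : ℕ, mu * (n + 1) - f (n + 1) ≤ a n := fun n => by
    have := neg_le_negVariation hf0 (n + 1)
    push_cast at this
    linarith
  have haf : ∀ n : ℕ, a n ≤ (mu + θ) * (n + 1) - f (n + 1) := fun n => by
    have := negVariation_le hH1 hθ hf0 (n + 1)
    push_cast at this
    linarith
  have ha : ∀ n, 0 < a n := fun n => lt_of_lt_of_le (by positivity) (hμa n)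
  rw [ENNReal.tsum_ofReal_eq_top_iff fun n => (one_div_pos.2 (ha n)).le]
  refine ⟨lintegral_inv_abs_eq_top_of_not_summable hH1 hθ hmu hf0 hfne hμa hfa, ?_⟩
  contrapose!
  exact lintegral_inv_abs_ne_top_of_summable hH1 hθ hmu ha₀ hf_cont hfne hμa haf
end
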